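/- Let μ > 0, δ > 0, σ > 0. Let ψ be a solution of the AL lattice on [0,T_f] and U a solution of the G-AL lattice on [0,T_f], and set y(t) = ψ(t) − U(t). Then for every t ∈ [0,T_f], ‖y(t)‖_{ℓ²} ≤ ‖y(0)‖_{ℓ²} + 2 ∫₀ᵗ ( μ ‖ψ(s)‖³_{ℓ²} + δ ‖U(s)‖^{2σ+1}_{ℓ²} ) ds. -/

import Mathlib

/-
Write `y = ψ - U`. Both lattices share the linear part `Δ`, the discrete Laplacian on `ℓ²(ℤ)`,
which is self-adjoint, so `Im ⟪y, Δ y⟫ = 0` and it drops out of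
`d/dt ‖y‖² = 2 Re ⟪y, ẏ⟫ = 2 Im ⟪y, i ẏ⟫`. What remains are the nonlinear terms, bounded
multipliers of shifts with `μ |ψₙ|² ≤ μ ‖ψ‖²` and `δ |Uₙ|^{2σ} ≤ δ ‖U‖^{2σ}`, so that
`d/dt ‖y‖² ≤ 2 ‖y‖ g` with `g = 2 (μ ‖ψ‖³ + δ ‖U‖^{2σ+1})`. Hence `√(‖y‖² + ε²) - ∫ g` is
antitone for every `ε > 0`, and `ε → 0` gives the bound.
-/

noncomputable section

open Set

/-- The sequence space ℓ²(ℤ,ℂ). -/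
abbrev Seq2 := lp (fun _ : ℤ => ℂ) 2


/-- `ψ` is a solution of the Ablowitz–Ladik (AL) lattice (κ = ν = 1) on `[0,Tf]`:
a continuously differentiable curve into ℓ²(ℤ,ℂ) satisfying
`i dψ_n/dt = (ψ_{n+1} − 2ψ_n + ψ_{n−1}) + μ|ψ_n|²(ψ_{n+1} + ψ_{n−1})` componentwise. -/
def IsALSolution (μ Tf : ℝ) (ψ : ℝ → Seq2) : Prop :=
  ∃ ψdot : ℝ → Seq2, ContinuousOn ψdot (Icc 0 Tf) ∧
    ∀ t ∈ Icc (0:ℝ) Tf,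
      HasDerivWithinAt ψ (ψdot t) (Icc 0 Tf) t ∧
      ∀ n : ℤ, Complex.I * ψdot t n =
        (ψ t (n+1) - 2 * ψ t n + ψ t (n-1))
          + (μ : ℂ) * (‖ψ t n‖^2 : ℝ) * (ψ t (n+1) + ψ t (n-1))


/-- `U` is a solution of the generalised Ablowitz–Ladik (G-AL) lattice on `[0,Tf]`:
a continuously differentiable curve into ℓ²(ℤ,ℂ) satisfying
`i dU_n/dt = (U_{n+1} − 2U_n + U_{n−1}) + δ|U_n|^{2σ}(U_{n+1} + U_{n−1})` componentwise. -/
def IsGALSolution (δ σ Tf : ℝ) (U : ℝ → Seq2) : Prop :=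
  ∃ Udot : ℝ → Seq2, ContinuousOn Udot (Icc 0 Tf) ∧
    ∀ t ∈ Icc (0:ℝ) Tf,
      HasDerivWithinAt U (Udot t) (Icc 0 Tf) t ∧
      ∀ n : ℤ, Complex.I * Udot t n =
        (U t (n+1) - 2 * U t n + U t (n-1))
          + (δ : ℂ) * (‖U t n‖ ^ (2*σ) : ℝ) * (U t (n+1) + U t (n-1))

open scoped InnerProductSpace ENNReal

theorem HasDerivWithinAt.norm_sq_of_rclike {𝕜 E : Type*} [RCLike 𝕜] [NormedAddCommGroup E]
    [InnerProductSpace 𝕜 E] [NormedSpace ℝ E] [IsScalarTower ℝ 𝕜 E]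
    {y : ℝ → E} {y' : E} {s : Set ℝ} {x : ℝ} (hy : HasDerivWithinAt y y' s x) :
    HasDerivWithinAt (‖y ·‖ ^ 2) (2 * RCLike.re ⟪y x, y'⟫_𝕜) s x := by
  have h := (RCLike.reCLM (K := 𝕜)).hasFDerivAt.comp_hasDerivWithinAt x (hy.inner 𝕜 hy)
  have hf : (‖y ·‖ ^ 2) = RCLike.reCLM ∘ fun t => ⟪y t, y t⟫_𝕜 := by
    funext t; simp
  have hf' : RCLike.reCLM (⟪y x, y'⟫_𝕜 + ⟪y', y x⟫_𝕜) = 2 * RCLike.re ⟪y x, y'⟫_𝕜 := by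
    rw [RCLike.reCLM_apply, map_add, inner_re_symm (𝕜 := 𝕜) y' (y x), two_mul]
  rwa [hf, ← hf']

theorem ContinuousOn.integral_hasDerivWithinAt_Icc {E : Type*} [NormedAddCommGroup E]
    [NormedSpace ℝ E] [CompleteSpace E] {g : ℝ → E} {a b x : ℝ}
    (hg : ContinuousOn g (Icc a b)) (hx : x ∈ Icc a b) :
    HasDerivWithinAt (fun s => ∫ r in a..s, g r) (g x) (Icc a b) x := by
  have : Fact (x ∈ Icc a b) := ⟨hx⟩
  refine intervalIntegral.integral_hasDerivWithinAt_right ?_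
    (hg.stronglyMeasurableAtFilter_nhdsWithin measurableSet_Icc x) (hg x hx)
  exact (hg.mono (by rw [uIcc_of_le hx.1]; exact Icc_subset_Icc le_rfl hx.2)).intervalIntegrable

theorem sqrt_le_sqrt_add_integral_of_deriv_le {φ φ' g : ℝ → ℝ} {a b : ℝ}
    (hφ : ∀ t ∈ Icc a b, HasDerivWithinAt φ (φ' t) (Icc a b) t)
    (hφ_nonneg : ∀ t ∈ Icc a b, 0 ≤ φ t) (hg : ContinuousOn g (Icc a b))
    (hg_nonneg : ∀ t ∈ Ioo a b, 0 ≤ g t)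
    (hφ' : ∀ t ∈ Ioo a b, φ' t ≤ 2 * √(φ t) * g t) :
    ∀ t ∈ Icc a b, √(φ t) ≤ √(φ a) + ∫ s in a..t, g s := by
  intro t ht
  have hab : a ≤ b := ht.1.trans ht.2
  refine le_of_forall_pos_le_add fun ε hε => ?_
  -- `√(φ + ε²)` is differentiable even where `φ` vanishes.
  set h : ℝ → ℝ := fun s => √(φ s + ε ^ 2) - ∫ r in a..s, g r
  have hh : ∀ x ∈ Icc a b, HasDerivWithinAt h
      (φ' x / (2 * √(φ x + ε ^ 2)) - g x) (Icc a b) x := fun x hx =>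
    (((hφ x hx).add_const _).sqrt (by nlinarith [hφ_nonneg x hx])).sub
      (hg.integral_hasDerivWithinAt_Icc hx)
  have hanti : AntitoneOn h (Icc a b) := by
    refine antitoneOn_of_hasDerivWithinAt_nonpos (convex_Icc a b)
      (f' := fun x => φ' x / (2 * √(φ x + ε ^ 2)) - g x) (fun x hx => (hh x hx).continuousWithinAt)
      (fun x hx => ?_) fun x hx => ?_
    · rw [interior_Icc] at hx ⊢
      exact (hh x (Ioo_subset_Icc_self hx)).mono Ioo_subset_Icc_self
    · rw [interior_Icc] at hx
      have hpos : 0 < √(φ x + ε ^ 2) :=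
        Real.sqrt_pos.2 (by nlinarith [hφ_nonneg x (Ioo_subset_Icc_self hx)])
      have hle : √(φ x) ≤ √(φ x + ε ^ 2) := Real.sqrt_le_sqrt (by nlinarith)
      rw [sub_nonpos, div_le_iff₀ (by positivity)]
      nlinarith [hφ' x hx, hg_nonneg x hx]
  have hinit : √(φ a + ε ^ 2) ≤ √(φ a) + ε := by
    have ha := hφ_nonneg a ⟨le_rfl, hab⟩
    rw [Real.sqrt_le_left (by positivity)]
    nlinarith [Real.sq_sqrt ha, Real.sqrt_nonneg (φ a)]
  calc √(φ t) ≤ √(φ t + ε ^ 2) := Real.sqrt_le_sqrt (by nlinarith)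
    _ ≤ √(φ a + ε ^ 2) + ∫ s in a..t, g s := by
      have := hanti ⟨le_rfl, hab⟩ ht ht.1
      simp only [h, intervalIntegral.integral_same] at this
      linarith
    _ ≤ _ := by linarith

theorem norm_le_norm_add_integral_of_re_inner_deriv_le {𝕜 E : Type*} [RCLike 𝕜]
    [NormedAddCommGroup E] [InnerProductSpace 𝕜 E] [NormedSpace ℝ E] [IsScalarTower ℝ 𝕜 E]
    {y y' : ℝ → E} {g : ℝ → ℝ} {a b : ℝ}
    (hy : ∀ t ∈ Icc a b, HasDerivWithinAt y (y' t) (Icc a b) t)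
    (hg : ContinuousOn g (Icc a b)) (hg_nonneg : ∀ t ∈ Ioo a b, 0 ≤ g t)
    (hy' : ∀ t ∈ Ioo a b, RCLike.re ⟪y t, y' t⟫_𝕜 ≤ ‖y t‖ * g t) :
    ∀ t ∈ Icc a b, ‖y t‖ ≤ ‖y a‖ + ∫ s in a..t, g s := by
  have h := sqrt_le_sqrt_add_integral_of_deriv_le (φ := (‖y ·‖ ^ 2))
    (fun t ht => (hy t ht).norm_sq_of_rclike) (fun _ _ => by positivity) hg hg_nonneg
    fun t ht => by
      rw [Real.sqrt_sq (norm_nonneg _)]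
      linarith [hy' t ht]
  simpa only [Real.sqrt_sq (norm_nonneg _)] using h

theorem Memℓp.comp_equiv {α β E : Type*} [NormedAddCommGroup E] {p : ℝ≥0∞} {f : α → E}
    (hf : Memℓp f p) (e : β ≃ α) : Memℓp (f ∘ e) p := by
  rcases p.trichotomy with rfl | rfl | hp
  · exact memℓp_zero (hf.finite_dsupport.preimage e.injective.injOn)
  · exact memℓp_infty (hf.bddAbove.mono (range_comp_subset_range e fun a => ‖f a‖))
  · exact memℓp_gen (e.summable_iff.2 (hf.summable hp))

namespace lp

variable {α β E : Type*} [NormedAddCommGroup E] {p : ℝ≥0∞}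

def compEquiv (f : lp (fun _ : α => E) p) (e : β ≃ α) : lp (fun _ : β => E) p :=
  ⟨f ∘ e, (lp.memℓp f).comp_equiv e⟩

@[simp]
theorem compEquiv_apply (f : lp (fun _ : α => E) p) (e : β ≃ α) (b : β) :
    compEquiv f e b = f (e b) := rfl

theorem norm_compEquiv (hp : 0 < p.toReal) (f : lp (fun _ : α => E) p) (e : β ≃ α) :
    ‖compEquiv f e‖ = ‖f‖ := by
  simp only [lp.norm_eq_tsum_rpow hp, compEquiv_apply]
  rw [e.tsum_eq fun a => ‖f a‖ ^ p.toReal]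

theorem inner_compEquiv_symm {𝕜 G : Type*} [RCLike 𝕜] [NormedAddCommGroup G]
    [InnerProductSpace 𝕜 G] (f : lp (fun _ : β => G) 2) (g : lp (fun _ : α => G) 2)
    (e : β ≃ α) : ⟪compEquiv f e.symm, g⟫_𝕜 = ⟪f, compEquiv g e⟫_𝕜 := by
  simp only [lp.inner_eq_tsum, compEquiv_apply]
  rw [← e.tsum_eq]
  simp

end lp

def discreteLaplacian {E : Type*} [NormedAddCommGroup E] {p : ℝ≥0∞}
    (f : lp (fun _ : ℤ => E) p) : lp (fun _ : ℤ => E) p :=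
  lp.compEquiv f (Equiv.addRight 1) + lp.compEquiv f (Equiv.addRight 1).symm - 2 • f

@[simp]
theorem discreteLaplacian_apply {E : Type*} [NormedAddCommGroup E] {p : ℝ≥0∞}
    (f : lp (fun _ : ℤ => E) p) (n : ℤ) :
    discreteLaplacian f n = f (n + 1) - 2 • f n + f (n - 1) := by
  simp only [discreteLaplacian, Equiv.addRight_symm, sub_eq_add_neg, AddSubgroup.coe_add,
    NegMemClass.coe_neg, AddSubmonoidClass.coe_nsmul, PreLp.add_apply, lp.compEquiv_apply,
    Equiv.coe_addRight, PreLp.neg_apply, PreLp.nsmul_apply]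
  abel

theorem discreteLaplacian_sub {E : Type*} [NormedAddCommGroup E] {p : ℝ≥0∞}
    (f g : lp (fun _ : ℤ => E) p) :
    discreteLaplacian (f - g) = discreteLaplacian f - discreteLaplacian g := by
  ext n
  simp only [discreteLaplacian_apply, AddSubgroupClass.coe_sub, PreLp.sub_apply]
  abel

theorem im_inner_discreteLaplacian_self {𝕜 E : Type*} [RCLike 𝕜] [NormedAddCommGroup E]
    [InnerProductSpace 𝕜 E] (f : lp (fun _ : ℤ => E) 2) :
    RCLike.im ⟪f, discreteLaplacian f⟫_𝕜 = 0 := by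
  have h : ⟪f, lp.compEquiv f (Equiv.addRight 1).symm⟫_𝕜
      = starRingEnd 𝕜 ⟪f, lp.compEquiv f (Equiv.addRight 1)⟫_𝕜 := by
    rw [← inner_conj_symm f (lp.compEquiv f _), lp.inner_compEquiv_symm]
  rw [discreteLaplacian, inner_sub_right, inner_add_right, h, two_smul, inner_add_right]
  simp only [map_add, map_sub, RCLike.conj_im, inner_self_im]
  ring

theorem norm_I_smul_sub_discreteLaplacian_le {a w : Seq2} {c : ℤ → ℂ} {C : ℝ}
    (hc : ∀ n, ‖c n‖ ≤ C)
    (hw : ∀ n, Complex.I * w n =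
      (a (n + 1) - 2 * a n + a (n - 1)) + c n * (a (n + 1) + a (n - 1))) :
    ‖Complex.I • w - discreteLaplacian a‖ ≤ 2 * C * ‖a‖ := by
  have hC : 0 ≤ C := (norm_nonneg _).trans (hc 0)
  set S : Seq2 := lp.compEquiv a (Equiv.addRight 1) + lp.compEquiv a (Equiv.addRight 1).symm
  have hS : ‖S‖ ≤ 2 * ‖a‖ := by
    refine (norm_add_le _ _).trans ?_
    rw [lp.norm_compEquiv (by norm_num), lp.norm_compEquiv (by norm_num)]
    linarith
  calc ‖Complex.I • w - discreteLaplacian a‖ ≤ ‖(C : ℂ) • S‖ := by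
        refine lp.norm_mono two_ne_zero fun n => ?_
        have h : (Complex.I • w - discreteLaplacian a) n = c n * (a (n + 1) + a (n - 1)) := by
          simp only [lp.coeFn_sub, lp.coeFn_smul, Pi.sub_apply, Pi.smul_apply, smul_eq_mul, hw,
            discreteLaplacian_apply, nsmul_eq_mul]
          push_cast
          ring
        have hSn : S n = a (n + 1) + a (n - 1) := by simp [S, sub_eq_add_neg]
        rw [h, norm_mul, lp.coeFn_smul, Pi.smul_apply, norm_smul, Complex.norm_real,
          Real.norm_of_nonneg hC, hSn]
        gcongr
        exact hc n
    _ ≤ 2 * C * ‖a‖ := by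
        rw [norm_smul, Complex.norm_real, Real.norm_of_nonneg hC]
        nlinarith

theorem re_inner_sub_sub_le_norm_sub_mul {E : Type*} [NormedAddCommGroup E]
    [InnerProductSpace ℂ E]
    (a b wa wb : lp (fun _ : ℤ => E) 2) :
    (⟪a - b, wa - wb⟫_ℂ).re ≤ ‖a - b‖ *
      (‖Complex.I • wa - discreteLaplacian a‖ + ‖Complex.I • wb - discreteLaplacian b‖) := by
  set y := a - b
  set N := (Complex.I • wa - discreteLaplacian a) - (Complex.I • wb - discreteLaplacian b)
  have hw : Complex.I • (wa - wb) = discreteLaplacian y + N := by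
    simp only [y, N, discreteLaplacian_sub, smul_sub]
    abel
  have hre : (⟪y, wa - wb⟫_ℂ).re = (⟪y, discreteLaplacian y⟫_ℂ).im + (⟪y, N⟫_ℂ).im := by
    rw [← Complex.add_im, ← inner_add_right, ← hw, inner_smul_right, Complex.I_mul_im]
  calc (⟪y, wa - wb⟫_ℂ).re = (⟪y, N⟫_ℂ).im := by
        rw [hre, show (⟪y, discreteLaplacian y⟫_ℂ).im = 0 from
          im_inner_discreteLaplacian_self (𝕜 := ℂ) y, zero_add]
    _ ≤ ‖y‖ * ‖N‖ := (Complex.im_le_norm _).trans (norm_inner_le_norm _ _)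
    _ ≤ _ := by gcongr; exact norm_sub_le _ _

theorem norm_ofReal_mul_rpow_norm_apply_le {μ r : ℝ} (hμ : 0 ≤ μ) (hr : 0 ≤ r) (a : Seq2)
    (n : ℤ) :
    ‖(μ : ℂ) * ((‖a n‖ ^ r : ℝ) : ℂ)‖ ≤ μ * ‖a‖ ^ r := by
  rw [norm_mul, Complex.norm_real, Complex.norm_real, Real.norm_of_nonneg hμ,
    Real.norm_of_nonneg (by positivity)]
  gcongr
  exact lp.norm_apply_le_norm two_ne_zero a n

theorem re_inner_sub_le_of_al_gal {μ δ σ : ℝ} (hμ : 0 ≤ μ) (hδ : 0 ≤ δ) (hσ : 0 ≤ σ)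
    {a b wa wb : Seq2}
    (ha : ∀ n : ℤ, Complex.I * wa n =
        (a (n+1) - 2 * a n + a (n-1)) + (μ : ℂ) * (‖a n‖^2 : ℝ) * (a (n+1) + a (n-1)))
    (hb : ∀ n : ℤ, Complex.I * wb n =
        (b (n+1) - 2 * b n + b (n-1)) + (δ : ℂ) * (‖b n‖ ^ (2*σ) : ℝ) * (b (n+1) + b (n-1))) :
    (⟪a - b, wa - wb⟫_ℂ).re ≤ ‖a - b‖ * (2 * (μ * ‖a‖^3 + δ * ‖b‖ ^ (2*σ+1))) := by
  have hNa := norm_I_smul_sub_discreteLaplacian_le (fun n => by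
    simpa only [Real.rpow_two] using norm_ofReal_mul_rpow_norm_apply_le hμ zero_le_two a n) ha
  have hNb := norm_I_smul_sub_discreteLaplacian_le
    (fun n => norm_ofReal_mul_rpow_norm_apply_le hδ (by positivity) b n) hb
  refine (re_inner_sub_sub_le_norm_sub_mul a b wa wb).trans ?_
  rw [Real.rpow_add' (norm_nonneg b) (by positivity), Real.rpow_one]
  gcongr
  linarith

/-- Integral inequality for the distance of an AL solution ψ and a G-AL solution U:
`‖y(t)‖ ≤ ‖y(0)‖ + 2∫₀ᵗ (μ‖ψ(s)‖³ + δ‖U(s)‖^{2σ+1}) ds` with `y = ψ − U`. -/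
theorem al_gal_distance_integral_inequality (μ δ σ Tf : ℝ)
    (hμ : 0 < μ) (hδ : 0 < δ) (hσ : 0 < σ)
    (ψ U : ℝ → Seq2) (hψ : IsALSolution μ Tf ψ) (hU : IsGALSolution δ σ Tf U) :
    ∀ t ∈ Icc (0:ℝ) Tf,
      ‖ψ t - U t‖ ≤ ‖ψ 0 - U 0‖
        + 2 * ∫ s in (0:ℝ)..t, (μ * ‖ψ s‖^3 + δ * ‖U s‖ ^ (2*σ+1)) := by
  obtain ⟨ψ', -, hψ'⟩ := hψ
  obtain ⟨U', -, hU'⟩ := hU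
  have hψc : ContinuousOn ψ (Icc 0 Tf) := fun t ht => (hψ' t ht).1.continuousWithinAt
  have hUc : ContinuousOn U (Icc 0 Tf) := fun t ht => (hU' t ht).1.continuousWithinAt
  intro t ht
  have h := norm_le_norm_add_integral_of_re_inner_deriv_le (𝕜 := ℂ)
    (g := fun s => 2 * (μ * ‖ψ s‖ ^ 3 + δ * ‖U s‖ ^ (2 * σ + 1)))
    (fun s hs => (hψ' s hs).1.sub (hU' s hs).1)
    (continuousOn_const.mul (continuousOn_const.mul (hψc.norm.pow 3) |>.add
      (continuousOn_const.mul (hUc.norm.rpow_const fun _ _ => Or.inr (by positivity)))))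
    (fun _ _ => by positivity)
    (fun s hs => re_inner_sub_le_of_al_gal hμ.le hδ.le hσ.le
      (hψ' s (Ioo_subset_Icc_self hs)).2 (hU' s (Ioo_subset_Icc_self hs)).2) t ht
  rwa [intervalIntegral.integral_const_mul] at h
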